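/- If X is a path-connected Hausdorff space and A ⊆ X is a finite disjoint union of closed path-connected subspaces A₁, A₂, …, A_k, then cat_X(A) = sup{ cat_X(A_i) : 1 ≤ i ≤ k }. -/

import Mathlib

open Set unitInterval Topology

/-- A point `x` of a topological space `X` is a *wild point* of `X` if every neighborhood `U`
of `x` contains a loop that is not null-homotopic in `X`. -/
def IsWildPoint {X : Type*} [TopologicalSpace X] (x : X) : Prop :=
  ∀ U ∈ 𝓝 x, ∃ (y : X) (γ : Path y y), Set.range ⇑γ ⊆ U ∧ ¬ γ.Homotopic (Path.refl y)

/-- The set of wild points of `X`. -/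
def wildSet (X : Type*) [TopologicalSpace X] : Set X := {x | IsWildPoint x}

/-- Iterated wild sets: `iterWild X 0 = X` and `iterWild X (n+1) = w(iterWild X n)`,
where the wild set of the subspace is taken with the subspace topology. -/
def iterWild (X : Type*) [TopologicalSpace X] : ℕ → Set X
  | 0 => Set.univ
  | n + 1 => Subtype.val '' wildSet ↥(iterWild X n)

/-- The wildness rank of `X`: the least `n` with `iterWild X n = ∅`, and `⊤` if none exists. -/
noncomputable def wildRank (X : Type*) [TopologicalSpace X] : ℕ∞ :=
  sInf ((↑) '' {n : ℕ | iterWild X n = ∅})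

/-- `X` is `w`-stable if every iterated wild set is locally path-connected. -/
def WStable (X : Type*) [TopologicalSpace X] : Prop :=
  ∀ n : ℕ, LocPathConnectedSpace ↥(iterWild X n)

/-- `X` has Lebesgue covering dimension at most one: every open cover admits an open
refinement which covers `X` and in which every point lies in at most two members. -/
def DimLEOne (X : Type*) [TopologicalSpace X] : Prop :=
  ∀ 𝒰 : Set (Set X), (∀ U ∈ 𝒰, IsOpen U) → ⋃₀ 𝒰 = Set.univ →
    ∃ 𝒱 : Set (Set X), (∀ V ∈ 𝒱, IsOpen V) ∧ ⋃₀ 𝒱 = Set.univ ∧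
      (∀ V ∈ 𝒱, ∃ U ∈ 𝒰, V ⊆ U) ∧
      ∀ x : X, ∃ V₁ V₂ : Set X, ∀ V ∈ 𝒱, x ∈ V → V = V₁ ∨ V = V₂

/-- A subset `A ⊆ X` is categorical in `X` if the inclusion `A → X` is homotopic to a
constant map. -/
def IsCategorical (X : Type*) [TopologicalSpace X] (A : Set X) : Prop :=
  ∃ y : X, ContinuousMap.Homotopic
    (⟨Subtype.val, continuous_subtype_val⟩ : C(↥A, X)) (ContinuousMap.const ↥A y)

/-- `A ⊆ X × X` admits a motion plan in `X` if the two coordinate projections `A → X`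
are homotopic. -/
def AdmitsMotionPlan (X : Type*) [TopologicalSpace X] (A : Set (X × X)) : Prop :=
  ContinuousMap.Homotopic
    (⟨fun p : A => (p : X × X).1, continuous_fst.comp continuous_subtype_val⟩ : C(↥A, X))
    (⟨fun p : A => (p : X × X).2, continuous_snd.comp continuous_subtype_val⟩ : C(↥A, X))

/-- The normalized Lusternik–Schnirelmann category of `X`, defined via closed filtrations
`∅ = F₋₁ ⊆ F 0 ⊆ ⋯ ⊆ F n = X` with categorical differences. -/
noncomputable def LSCat (X : Type*) [TopologicalSpace X] : ℕ∞ :=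
  sInf ((↑) '' {n : ℕ | ∃ F : ℕ → Set X, Monotone F ∧ (∀ j, IsClosed (F j)) ∧
    F n = Set.univ ∧ IsCategorical X (F 0) ∧ ∀ j < n, IsCategorical X (F (j + 1) \ F j)})

/-- The normalized topological complexity of `X`, defined via closed filtrations of `X × X`
whose differences admit motion plans. -/
noncomputable def TopComplexity (X : Type*) [TopologicalSpace X] : ℕ∞ :=
  sInf ((↑) '' {n : ℕ | ∃ F : ℕ → Set (X × X), Monotone F ∧ (∀ j, IsClosed (F j)) ∧
    F n = Set.univ ∧ AdmitsMotionPlan X (F 0) ∧ ∀ j < n, AdmitsMotionPlan X (F (j + 1) \ F j)})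

/-- The relative LS-category `cat_X(A)` defined via filtrations of `A` by subsets closed in `A`
whose differences are categorical in `X`. -/
noncomputable def relCat (X : Type*) [TopologicalSpace X] (A : Set X) : ℕ∞ :=
  sInf ((↑) '' {n : ℕ | ∃ F : ℕ → Set X, Monotone F ∧ (∀ j, F j ⊆ A) ∧
    (∀ j, IsClosed ((Subtype.val ⁻¹' F j : Set ↥A))) ∧ F n = A ∧
    IsCategorical X (F 0) ∧ ∀ j < n, IsCategorical X (F (j + 1) \ F j)})

/-- A simple closed curve in `X` is a subspace homeomorphic to the circle. -/
def IsSimpleClosedCurve {X : Type*} [TopologicalSpace X] (S : Set X) : Prop :=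
  Nonempty (↥S ≃ₜ Circle)

/-- A continuous map is `π₁`-injective if every based loop whose image is null-homotopic is
itself null-homotopic (equivalently, the induced homomorphism on fundamental groups is
injective at every basepoint). -/
def Pi1Injective {X Y : Type*} [TopologicalSpace X] [TopologicalSpace Y] (f : C(X, Y)) : Prop :=
  ∀ (x : X) (γ : Path x x), (γ.map f.continuous).Homotopic (Path.refl (f x)) →
    γ.Homotopic (Path.refl x)

/-! A filtration of `⋃ i, A i` restricts to a filtration of each `A i` of the same length,
which gives `cat_X(A i) ≤ cat_X(⋃ A)`. Conversely, pad filtrations of the `A i` to a common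
length and take their unions stage by stage. Finitely many disjoint closed sets are open in their
union, so null-homotopies of the pieces glue; path-connectedness of `X` lets all of them end at
the same point. -/

open Function

namespace ContinuousMap

variable {Y Z : Type*} [TopologicalSpace Y] [TopologicalSpace Z]

theorem Homotopic.of_restrict_of_isOpen {ι : Type*} {C : ι → Set Y}
    (hopen : ∀ i, IsOpen (C i)) (hcov : ⋃ i, C i = univ) (hdisj : Pairwise (Disjoint on C))
    {f g : C(Y, Z)} (h : ∀ i, (f.restrict (C i)).Homotopic (g.restrict (C i))) :
    f.Homotopic g := by
  have hcover := iUnion_eq_univ_iff.mp hcov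
  let H i := (h i).some
  let φ i : C((univ : Set I) ×ˢ C i, Z) :=
    (H i).toContinuousMap.comp ⟨fun z => (z.1.1, ⟨z.1.2, z.2.2⟩), by fun_prop⟩
  have hφ : ∀ i j z (hi : z ∈ univ ×ˢ C i) (hj : z ∈ univ ×ˢ C j),
      φ i ⟨z, hi⟩ = φ j ⟨z, hj⟩ := by
    intro i j z hi hj
    obtain rfl : i = j := hdisj.eq (not_disjoint_iff.mpr ⟨z.2, hi.2, hj.2⟩)
    rfl
  have hnhds : ∀ z : I × Y, ∃ i, univ ×ˢ C i ∈ 𝓝 z := fun z =>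
    (hcover z.2).imp fun i hi => (isOpen_univ.prod (hopen i)).mem_nhds ⟨mem_univ _, hi⟩
  let G := liftCover _ φ hφ hnhds
  have hG : ∀ t y i (hi : y ∈ C i), G (t, y) = H i (t, ⟨y, hi⟩) := fun t y i hi =>
    liftCover_coe (S := fun i => univ ×ˢ C i) ⟨(t, y), mem_univ t, hi⟩
  refine ⟨{ toContinuousMap := G, map_zero_left y := ?_, map_one_left y := ?_ }⟩ <;>
    obtain ⟨i, hi⟩ := hcover y
  · exact (hG 0 y i hi).trans ((H i).apply_zero ⟨y, hi⟩)
  · exact (hG 1 y i hi).trans ((H i).apply_one ⟨y, hi⟩)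

theorem Nullhomotopic.homotopic_const [PathConnectedSpace Z] {f : C(Y, Z)}
    (hf : f.Nullhomotopic) (z : Z) : f.Homotopic (const Y z) :=
  let ⟨_, hz⟩ := hf
  hz.trans ⟨(PathConnectedSpace.somePath _ z).toHomotopyConst⟩

theorem Nullhomotopic.of_restrict_of_isOpen [PathConnectedSpace Z] {ι : Type*} {C : ι → Set Y}
    (hopen : ∀ i, IsOpen (C i)) (hcov : ⋃ i, C i = univ) (hdisj : Pairwise (Disjoint on C))
    {f : C(Y, Z)} (h : ∀ i, (f.restrict (C i)).Nullhomotopic) : f.Nullhomotopic :=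
  let z : Z := Classical.arbitrary Z
  ⟨z, .of_restrict_of_isOpen hopen hcov hdisj fun i => (h i).homotopic_const z⟩

end ContinuousMap

theorem isOpen_of_isClosed_of_iUnion_eq_univ {Y ι : Type*} [TopologicalSpace Y] [Finite ι]
    {C : ι → Set Y} (hclosed : ∀ i, IsClosed (C i)) (hcov : ⋃ i, C i = univ)
    (hdisj : Pairwise (Disjoint on C)) (i : ι) : IsOpen (C i) := by
  rw [← isClosed_compl_iff, compl_eq_univ_sdiff, ← hcov, iUnion_sdiff]
  refine isClosed_iUnion_of_finite fun j => ?_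
  rcases eq_or_ne j i with rfl | hji
  · simp
  · simpa only [(hdisj hji).sdiff_eq_left] using hclosed j

section Categorical

variable {X : Type*} [TopologicalSpace X]

theorem IsCategorical.mono {A B : Set X} (h : IsCategorical X A) (hBA : B ⊆ A) :
    IsCategorical X B :=
  ContinuousMap.Nullhomotopic.comp_left h ⟨inclusion hBA, continuous_inclusion hBA⟩

theorem isCategorical_iUnion [PathConnectedSpace X] {ι : Type*} [Finite ι] {A S : ι → Set X}
    (hcl : ∀ i, IsClosed (A i)) (hdisj : Pairwise (Disjoint on A)) (hS : ∀ i, S i ⊆ A i)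
    (hcat : ∀ i, IsCategorical X (S i)) : IsCategorical X (⋃ i, S i) := by
  have hmem : ∀ i, ∀ x ∈ ⋃ j, S j, x ∈ A i → x ∈ S i := by
    intro i x hx hxi
    obtain ⟨j, hxj⟩ := mem_iUnion.mp hx
    obtain rfl : j = i := hdisj.eq (not_disjoint_iff.mpr ⟨x, hS j hxj, hxi⟩)
    exact hxj
  let C i : Set ↥(⋃ j, S j) := Subtype.val ⁻¹' A i
  have hcov : ⋃ i, C i = univ :=
    iUnion_eq_univ_iff.mpr fun x => (mem_iUnion.mp x.2).imp fun i hi => hS i hi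
  have hdisjC : Pairwise (Disjoint on C) := fun i j hij => (hdisj hij).preimage _
  have hopen := isOpen_of_isClosed_of_iUnion_eq_univ
    (fun i => (hcl i).preimage continuous_subtype_val) hcov hdisjC
  exact ContinuousMap.Nullhomotopic.of_restrict_of_isOpen hopen hcov hdisjC fun i =>
    ContinuousMap.Nullhomotopic.comp_left (hcat i)
      ⟨fun x : C i => ⟨x.1.1, hmem i x.1.1 x.1.2 x.2⟩, by fun_prop⟩

end Categorical

structure IsCategoricalFiltration (X : Type*) [TopologicalSpace X] (A : Set X) (n : ℕ)
    (F : ℕ → Set X) : Prop where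
  monotone : Monotone F
  subset : ∀ j, F j ⊆ A
  isClosed_preimage : ∀ j, IsClosed (Subtype.val ⁻¹' F j : Set A)
  last_eq : F n = A
  isCategorical_zero : IsCategorical X (F 0)
  isCategorical_sdiff : ∀ j < n, IsCategorical X (F (j + 1) \ F j)

namespace IsCategoricalFiltration

variable {X : Type*} [TopologicalSpace X] {A B : Set X} {m n : ℕ} {F : ℕ → Set X}

theorem isClosed (h : IsCategoricalFiltration X A n F) (hA : IsClosed A) (j : ℕ) :
    IsClosed (F j) := by
  simpa only [Subtype.image_preimage_coe, inter_eq_right.mpr (h.subset j)] using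
    (h.isClosed_preimage j).trans hA

theorem extend (h : IsCategoricalFiltration X A m F) (hmn : m ≤ n) :
    IsCategoricalFiltration X A n (fun j => F (min j m)) where
  monotone := h.monotone.comp (monotone_id.min monotone_const)
  subset j := h.subset _
  isClosed_preimage j := h.isClosed_preimage _
  last_eq := by simp only [min_eq_right hmn, h.last_eq]
  isCategorical_zero := by simpa only [zero_le, min_eq_left] using h.isCategorical_zero
  isCategorical_sdiff j _ := by
    rcases lt_or_ge j m with hjm | hmj
    · simpa only [min_eq_left hjm.le, min_eq_left (Nat.succ_le_of_lt hjm)] using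
        h.isCategorical_sdiff j hjm
    · simpa only [min_eq_right hmj, min_eq_right (hmj.trans j.le_succ), Set.sdiff_self] using
        h.isCategorical_zero.mono (empty_subset _)

theorem inter (h : IsCategoricalFiltration X A n F) (hBA : B ⊆ A) :
    IsCategoricalFiltration X B n (fun j => F j ∩ B) where
  monotone _ _ hab := inter_subset_inter_left _ (h.monotone hab)
  subset _ := inter_subset_right
  isClosed_preimage j := by
    rw [Subtype.preimage_coe_inter_self]
    exact (h.isClosed_preimage j).preimage (continuous_inclusion hBA)
  last_eq := by rw [h.last_eq, inter_eq_right.mpr hBA]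
  isCategorical_zero := h.isCategorical_zero.mono inter_subset_left
  isCategorical_sdiff j hj := by
    rw [← inter_sdiff_distrib_right]
    exact (h.isCategorical_sdiff j hj).mono inter_subset_left

theorem iUnion [PathConnectedSpace X] {ι : Type*} [Finite ι] {A : ι → Set X}
    (hcl : ∀ i, IsClosed (A i)) (hdisj : Pairwise (Disjoint on A)) {F : ι → ℕ → Set X}
    (hF : ∀ i, IsCategoricalFiltration X (A i) n (F i)) :
    IsCategoricalFiltration X (⋃ i, A i) n (fun j => ⋃ i, F i j) where
  monotone _ _ hab := iUnion_mono fun i => (hF i).monotone hab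
  subset j := iUnion_mono fun i => (hF i).subset j
  isClosed_preimage j :=
    (isClosed_iUnion_of_finite fun i => (hF i).isClosed (hcl i) j).preimage continuous_subtype_val
  last_eq := iUnion_congr fun i => (hF i).last_eq
  isCategorical_zero :=
    isCategorical_iUnion hcl hdisj (fun i => (hF i).subset 0) fun i => (hF i).isCategorical_zero
  isCategorical_sdiff j hj := by
    refine (isCategorical_iUnion hcl hdisj (fun i => sdiff_subset.trans ((hF i).subset _))
      fun i => (hF i).isCategorical_sdiff j hj).mono ?_
    rw [iUnion_sdiff]
    exact iUnion_mono fun i => sdiff_subset_sdiff_right (subset_iUnion (F · j) i)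

end IsCategoricalFiltration

section relCat

variable {X : Type*} [TopologicalSpace X] {A B : Set X}

theorem relCat_eq_sInf :
    relCat X A = sInf ((↑) '' {n : ℕ | ∃ F, IsCategoricalFiltration X A n F}) := by
  unfold relCat
  congr! 4 with n
  exact ⟨fun ⟨F, h₁, h₂, h₃, h₄, h₅, h₆⟩ => ⟨F, ⟨h₁, h₂, h₃, h₄, h₅, h₆⟩⟩,
    fun ⟨F, ⟨h₁, h₂, h₃, h₄, h₅, h₆⟩⟩ => ⟨F, h₁, h₂, h₃, h₄, h₅, h₆⟩⟩

theorem relCat_le_iff {n : ℕ} : relCat X A ≤ n ↔ ∃ F, IsCategoricalFiltration X A n F := by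
  rw [relCat_eq_sInf]
  refine ⟨fun h => ?_, fun ⟨F, hF⟩ => sInf_le ⟨n, ⟨F, hF⟩, rfl⟩⟩
  have hne : ((↑) '' {m : ℕ | ∃ F, IsCategoricalFiltration X A m F} : Set ℕ∞).Nonempty := by
    by_contra hempty
    rw [not_nonempty_iff_eq_empty.mp hempty, sInf_empty] at h
    exact ENat.natCast_ne_top n (top_le_iff.mp h)
  obtain ⟨m, ⟨F, hF⟩, hm⟩ := csInf_mem hne
  exact ⟨_, hF.extend (by exact_mod_cast hm ▸ h)⟩

theorem relCat_mono (hBA : B ⊆ A) : relCat X B ≤ relCat X A := by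
  rw [relCat_eq_sInf, relCat_eq_sInf]
  exact sInf_le_sInf (image_mono fun _ ⟨_, hF⟩ => ⟨_, hF.inter hBA⟩)

end relCat

theorem relCat_finite_disjoint_union_general (X : Type*) [TopologicalSpace X]
    [PathConnectedSpace X] (k : ℕ) (A : Fin k → Set X)
    (hcl : ∀ i, IsClosed (A i))
    (hdisj : Pairwise (Function.onFun Disjoint A)) :
    relCat X (⋃ i, A i) = ⨆ i, relCat X (A i) := by
  refine le_antisymm ?_ (iSup_le fun i => relCat_mono (subset_iUnion A i))
  cases hN : ⨆ i, relCat X (A i) using ENat.recTopCoe with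
  | top => exact le_top
  | coe N =>
    have hF i : ∃ F, IsCategoricalFiltration X (A i) N F :=
      relCat_le_iff.mp (hN ▸ le_iSup (fun i => relCat X (A i)) i)
    choose F hF using hF
    exact relCat_le_iff.mpr ⟨_, .iUnion hcl hdisj hF⟩

/-- If `A` is a finite disjoint union of closed path-connected subspaces `A₁, …, A_k`, then
`cat_X(A) = sup_i cat_X(A_i)`. -/
theorem relCat_finite_disjoint_union (X : Type*) [TopologicalSpace X] [T2Space X]
    [PathConnectedSpace X] (k : ℕ) (A : Fin k → Set X)
    (hcl : ∀ i, IsClosed (A i)) (hpc : ∀ i, IsPathConnected (A i))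
    (hdisj : Pairwise (Function.onFun Disjoint A)) :
    relCat X (⋃ i, A i) = ⨆ i, relCat X (A i) :=
  relCat_finite_disjoint_union_general X k A hcl hdisj
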